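/- arXiv:2101.02916 — 3 statements merged into one kernel-verified Lean document; each statement's English description precedes it below -/
import Mathlib

section
/- Let f be a Fréchet-differentiable function of weights W = (w^(1), …, w^(m)) and parameters g that is positively scale-invariant in W. Then for every W with nonzero blocks, every g, every index i, and every real step size η: ‖w^(i) + η · ∇_{w^(i)} f(W, g)‖² = ‖w^(i)‖² + η² · ‖∇_{w^(i)} f(W, g)‖². -/
open MeasureTheory RealInnerProductSpace
open scoped BigOperators

noncomputable section

/-- The space of weight tuples `W = (w⁽¹⁾, …, w⁽ᵐ⁾)` with `w⁽ⁱ⁾ ∈ ℝ^{dᵢ}`. -/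
abbrev Wsp (m : ℕ) (d : Fin m → ℕ) : Type :=
  PiLp 2 fun i : Fin m => EuclideanSpace ℝ (Fin (d i))

/-- The space of extra parameters `g ∈ ℝᵖ`. -/
abbrev Gsp (p : ℕ) : Type := EuclideanSpace ℝ (Fin p)

/-- Blockwise positive rescaling `T_a(W) = (a₁ w⁽¹⁾, …, a_m w⁽ᵐ⁾)`. -/
def rescale {m : ℕ} {d : Fin m → ℕ} (a : Fin m → ℝ) (W : Wsp m d) : Wsp m d :=
  WithLp.toLp 2 fun i => a i • W i

/-- `f` is positively scale-invariant in the weights. -/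
def PSI {m p : ℕ} {d : Fin m → ℕ} (f : Wsp m d → Gsp p → ℝ) : Prop :=
  ∀ a : Fin m → ℝ, (∀ i, 0 < a i) → ∀ W g, f (rescale a W) g = f W g

/-- Partial (Fréchet) gradient of `f` in the `i`-th weight block. -/
def gradW {m p : ℕ} {d : Fin m → ℕ} (f : Wsp m d → Gsp p → ℝ)
    (W : Wsp m d) (g : Gsp p) (i : Fin m) : EuclideanSpace ℝ (Fin (d i)) :=
  gradient (fun v => f (WithLp.toLp 2 (Function.update W i v)) g) (W i)

/-! Scale invariance makes `t ↦ f(…, t • w⁽ⁱ⁾, …, g)` constant on `t > 0`, so its derivative at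
`t = 1`, which is `⟪∇_{w⁽ⁱ⁾} f, w⁽ⁱ⁾⟫`, vanishes (Euler's identity in degree `0`); the claimed
identity is then Pythagoras. Where the partial map is not differentiable, Mathlib's `gradient`
is `0` and the orthogonality holds trivially. -/

open Filter Topology

theorem inner_gradient_self_eq_zero_of_smul_invariant {E : Type*} [NormedAddCommGroup E]
    [InnerProductSpace ℝ E] [CompleteSpace E] {h : E → ℝ} {x : E}
    (hh : ∀ t : ℝ, 0 < t → h (t • x) = h x) : ⟪gradient h x, x⟫ = 0 := by
  by_cases hd : DifferentiableAt ℝ h x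
  · have hray : HasDerivAt (fun t : ℝ => h (t • x)) ⟪gradient h x, x⟫ 1 := by
      have hgrad : HasFDerivAt h (fderiv ℝ h x) ((1 : ℝ) • x) := by
        rw [one_smul]; exact hd.hasFDerivAt
      rw [← hd.hasGradientAt.fderiv_apply]
      have := hgrad.comp_hasDerivAt (1 : ℝ) ((hasDerivAt_id (1 : ℝ)).smul_const x)
      rwa [one_smul] at this
    have hconst : (fun t : ℝ => h (t • x)) =ᶠ[𝓝 1] fun _ => h x :=
      eventually_of_mem (Ioi_mem_nhds one_pos) hh
    exact hray.unique ((hasDerivAt_const 1 (h x)).congr_of_eventuallyEq hconst)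
  · rw [gradient_eq_zero_of_not_differentiableAt hd, inner_zero_left]

theorem norm_add_smul_sq_of_inner_eq_zero {F : Type*} [NormedAddCommGroup F]
    [InnerProductSpace ℝ F] {x y : F} (hxy : ⟪x, y⟫ = 0) (η : ℝ) :
    ‖x + η • y‖ ^ 2 = ‖x‖ ^ 2 + η ^ 2 * ‖y‖ ^ 2 := by
  rw [norm_add_sq_real, real_inner_smul_right, hxy, norm_smul, mul_pow, Real.norm_eq_abs, sq_abs]
  ring

theorem rescale_update_one {m : ℕ} {d : Fin m → ℕ} (W : Wsp m d) (i : Fin m) (t : ℝ) :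
    rescale (Function.update 1 i t) W = WithLp.toLp 2 (Function.update W i (t • W i)) := by
  ext j : 1
  by_cases hj : j = i
  · subst hj; simp [rescale]
  · simp [rescale, hj]

theorem PSI.apply_update_smul {m p : ℕ} {d : Fin m → ℕ} {f : Wsp m d → Gsp p → ℝ} (hf : PSI f)
    (W : Wsp m d) (g : Gsp p) (i : Fin m) {t : ℝ} (ht : 0 < t) :
    f (WithLp.toLp 2 (Function.update W i (t • W i))) g = f W g := by
  rw [← rescale_update_one]
  refine hf _ (fun j => ?_) W g
  by_cases hj : j = i
  · subst hj; simpa using ht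
  · simp [hj]

theorem PSI.inner_gradW_self {m p : ℕ} {d : Fin m → ℕ} {f : Wsp m d → Gsp p → ℝ} (hf : PSI f)
    (W : Wsp m d) (g : Gsp p) (i : Fin m) : ⟪gradW f W g i, W i⟫ = 0 :=
  inner_gradient_self_eq_zero_of_smul_invariant fun _ ht => by
    rw [hf.apply_update_smul W g i ht, Function.update_eq_self, WithLp.toLp_ofLp]

theorem stmt3_general {m p : ℕ} {d : Fin m → ℕ} (f : Wsp m d → Gsp p → ℝ)
    (hPSI : PSI f)
    (W : Wsp m d) (g : Gsp p) (i : Fin m) (η : ℝ) :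
    ‖W i + η • gradW f W g i‖ ^ 2 = ‖W i‖ ^ 2 + η ^ 2 * ‖gradW f W g i‖ ^ 2 :=
  norm_add_smul_sq_of_inner_eq_zero (real_inner_comm (W i) _ ▸ hPSI.inner_gradW_self W g i) η

/-- For a Fréchet-differentiable, positively scale-invariant `f`,
weights with nonzero blocks and any real step size `η`,
`‖w⁽ⁱ⁾ + η ∇_{w⁽ⁱ⁾} f(W,g)‖² = ‖w⁽ⁱ⁾‖² + η² ‖∇_{w⁽ⁱ⁾} f(W,g)‖²`. -/
theorem stmt3 {m p : ℕ} {d : Fin m → ℕ} (f : Wsp m d → Gsp p → ℝ)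
    (hdiff : Differentiable ℝ fun q : Wsp m d × Gsp p => f q.1 q.2)
    (hPSI : PSI f)
    (W : Wsp m d) (hW : ∀ j, W j ≠ 0) (g : Gsp p) (i : Fin m) (η : ℝ) :
    ‖W i + η • gradW f W g i‖ ^ 2 = ‖W i‖ ^ 2 + η ^ 2 * ‖gradW f W g i‖ ^ 2 :=
  stmt3_general f hPSI W g i η

end
end

section
/- Let (f_t)_{t≥0} be Fréchet-differentiable functions of weights W = (w^(1), …, w^(m)) and parameters g, each positively scale-invariant in W. Fix learning rates η_t^(i) > 0, η_t^g > 0 and consider the PSI-(S)GD updates: w_{t+1}^(i) = w_t^(i) − η_t^(i) ‖w_t^(i)‖² ∇_{w^(i)} f_t(W_t, g_t), g_{t+1} = g_t − η_t^g ∇_g f_t(W_t, g_t). Let (Ŵ_t, ĝ_t) be the iterates of the same updates started from Ŵ_0 = T_a(W_0), ĝ_0 = g_0 for some a ∈ ℝ^m with all a_i > 0, where all blocks of W_0 are nonzero. Then for every t, Ŵ_t = T_a(W_t) and ĝ_t = g_t. -/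
/-!
By scale invariance, the partial function of `f` in block `i` at `T_a(W)` is the one at `W`
precomposed with `v ↦ aᵢ⁻¹ v`, so `∇_{w⁽ⁱ⁾} f(T_a W, g) = aᵢ⁻¹ ∇_{w⁽ⁱ⁾} f(W, g)`, while
`∇_g f(T_a W, g) = ∇_g f(W, g)`. In the weight update the factor `‖aᵢ w‖² = aᵢ² ‖w‖²` turns
this `aᵢ⁻¹` into `aᵢ`, so one step maps `(T_a W, g)` to `T_a` of the step from `(W, g)`;
induction on `t` concludes.
-/

open MeasureTheory RealInnerProductSpace
open scoped BigOperators

noncomputable section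

/-- Partial (Fréchet) gradient of `f` in the parameters `g`. -/
def gradG {m p : ℕ} {d : Fin m → ℕ} (f : Wsp m d → Gsp p → ℝ)
    (W : Wsp m d) (g : Gsp p) : Gsp p :=
  gradient (fun u => f W u) g

theorem gradient_comp_smul {E : Type*} [NormedAddCommGroup E] [InnerProductSpace ℝ E]
    [CompleteSpace E] (h : E → ℝ) (c : ℝ) (x : E) :
    gradient (fun v => h (c • v)) x = c • gradient h (c • x) := by
  rw [gradient, fderiv_comp_smul, map_smul, gradient]

section Rescale

variable {m p : ℕ} {d : Fin m → ℕ}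

lemma update_rescale (a : Fin m → ℝ) {i : Fin m} (hai : a i ≠ 0) (W : Wsp m d)
    (v : EuclideanSpace ℝ (Fin (d i))) :
    WithLp.toLp 2 (Function.update (rescale a W) i v)
      = rescale a (WithLp.toLp 2 (Function.update W i ((a i)⁻¹ • v))) := by
  refine PiLp.ext fun j => ?_
  rcases eq_or_ne j i with rfl | hj
  · simp [rescale, smul_smul, mul_inv_cancel₀ hai]
  · simp [rescale, Function.update_of_ne hj]

lemma gradW_rescale {F : Wsp m d → Gsp p → ℝ} (hF : PSI F) {a : Fin m → ℝ}
    (ha : ∀ i, 0 < a i) (W : Wsp m d) (g : Gsp p) (i : Fin m) :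
    gradW F (rescale a W) g i = (a i)⁻¹ • gradW F W g i := by
  have hai : a i ≠ 0 := (ha i).ne'
  have hpartial : (fun v => F (WithLp.toLp 2 (Function.update (rescale a W) i v)) g)
      = fun v => (fun u => F (WithLp.toLp 2 (Function.update W i u)) g) ((a i)⁻¹ • v) := by
    funext v
    rw [update_rescale a hai, hF a ha]
  calc gradW F (rescale a W) g i
      = gradient (fun v => F (WithLp.toLp 2 (Function.update (rescale a W) i v)) g)
          (a i • W i) := rfl
    _ = (a i)⁻¹ • gradW F W g i := by
      rw [hpartial, gradient_comp_smul (fun u => F (WithLp.toLp 2 (Function.update W i u)) g),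
        inv_smul_smul₀ hai]
      rfl

lemma gradG_rescale {F : Wsp m d → Gsp p → ℝ} (hF : PSI F) {a : Fin m → ℝ}
    (ha : ∀ i, 0 < a i) (W : Wsp m d) (g : Gsp p) :
    gradG F (rescale a W) g = gradG F W g :=
  congrArg (gradient · g) (funext fun u => hF a ha W u)

end Rescale

lemma smul_sub_norm_sq_smul_inv_smul {E : Type*} [NormedAddCommGroup E] [NormedSpace ℝ E]
    {c : ℝ} (hc : c ≠ 0) (η : ℝ) (w G : E) :
    c • w - (η * ‖c • w‖ ^ 2) • c⁻¹ • G = c • (w - (η * ‖w‖ ^ 2) • G) := by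
  rw [smul_sub, smul_smul, smul_smul, norm_smul, Real.norm_eq_abs, mul_pow, sq_abs]
  congr 2
  field_simp

theorem stmt10_general {m p : ℕ} {d : Fin m → ℕ} (f : ℕ → Wsp m d → Gsp p → ℝ)
    (hPSI : ∀ t, PSI (f t))
    (η : ℕ → Fin m → ℝ)
    (ηg : ℕ → ℝ)
    (W W' : ℕ → Wsp m d) (g g' : ℕ → Gsp p)
    (a : Fin m → ℝ) (ha : ∀ i, 0 < a i)
    (hW : ∀ t i, W (t + 1) i
      = W t i - (η t i * ‖W t i‖ ^ 2) • gradW (f t) (W t) (g t) i)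
    (hg : ∀ t, g (t + 1) = g t - ηg t • gradG (f t) (W t) (g t))
    (hW' : ∀ t i, W' (t + 1) i
      = W' t i - (η t i * ‖W' t i‖ ^ 2) • gradW (f t) (W' t) (g' t) i)
    (hg' : ∀ t, g' (t + 1) = g' t - ηg t • gradG (f t) (W' t) (g' t))
    (hW'0 : W' 0 = rescale a (W 0)) (hg'0 : g' 0 = g 0) :
    ∀ t, W' t = rescale a (W t) ∧ g' t = g t := by
  intro t
  induction t with
  | zero => exact ⟨hW'0, hg'0⟩
  | succ t ih =>
    obtain ⟨ihW, ihg⟩ := ih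
    refine ⟨PiLp.ext fun i => ?_, ?_⟩
    · calc W' (t + 1) i
          = a i • W t i - (η t i * ‖a i • W t i‖ ^ 2) • (a i)⁻¹ • gradW (f t) (W t) (g t) i := by
            rw [hW', ihW, ihg, gradW_rescale (hPSI t) ha]; rfl
        _ = rescale a (W (t + 1)) i := by
            rw [smul_sub_norm_sq_smul_inv_smul (ha i).ne', ← hW]; rfl
    · rw [hg', ihW, ihg, gradG_rescale (hPSI t) ha, hg]

/-- PSI-(S)GD iterates started from positively scale-equivalent points
stay positively scale-equivalent: if `Ŵ₀ = T_a(W₀)` and `ĝ₀ = g₀`, then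
`Ŵ_t = T_a(W_t)` and `ĝ_t = g_t` for every `t`. -/
theorem stmt10 {m p : ℕ} {d : Fin m → ℕ} (f : ℕ → Wsp m d → Gsp p → ℝ)
    (hdiff : ∀ t, Differentiable ℝ fun q : Wsp m d × Gsp p => f t q.1 q.2)
    (hPSI : ∀ t, PSI (f t))
    (η : ℕ → Fin m → ℝ) (hη : ∀ t i, 0 < η t i)
    (ηg : ℕ → ℝ) (hηg : ∀ t, 0 < ηg t)
    (W W' : ℕ → Wsp m d) (g g' : ℕ → Gsp p)
    (a : Fin m → ℝ) (ha : ∀ i, 0 < a i)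
    (hW0nz : ∀ i, W 0 i ≠ 0)
    (hW : ∀ t i, W (t + 1) i
      = W t i - (η t i * ‖W t i‖ ^ 2) • gradW (f t) (W t) (g t) i)
    (hg : ∀ t, g (t + 1) = g t - ηg t • gradG (f t) (W t) (g t))
    (hW' : ∀ t i, W' (t + 1) i
      = W' t i - (η t i * ‖W' t i‖ ^ 2) • gradW (f t) (W' t) (g' t) i)
    (hg' : ∀ t, g' (t + 1) = g' t - ηg t • gradG (f t) (W' t) (g' t))
    (hW'0 : W' 0 = rescale a (W 0)) (hg'0 : g' 0 = g 0) :
    ∀ t, W' t = rescale a (W t) ∧ g' t = g t :=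
  stmt10_general f hPSI η ηg W W' g g' a ha hW hg hW' hg' hW'0 hg'0

end
end

section
/- (Weight-norm bound for GD.) Let f be a twice continuously differentiable function of weights W = (w^(1), …, w^(m)) and parameters g ∈ ℝ^p, bounded below with infimum f*, positively scale-invariant in W, whose second-derivative blocks satisfy, at every point, ‖∇²_{w^(i) w^(j)} f‖_op ≤ L_ij^{ww}, ‖∇²_{w^(i) g} f‖_op ≤ L_i^{wg}, ‖∇²_{gg} f‖_op ≤ L^{gg} (positive constants); set L̃_{w^(i)} = L_i^{wg} + Σ_j L_ij^{ww} and L̃_g = m L^{gg} + Σ_i L_i^{wg}. Let (W_t, g_t) be generated by gradient descent w_{t+1}^(i) = w_t^(i) − (1/L̃_{w^(i)}) ∇_{w^(i)} f(W_t, g_t), g_{t+1} = g_t − (1/L̃_g) ∇_g f(W_t, g_t), with all blocks of W_0 nonzero. Then for every t ≥ 0 and every index i, ‖w_t^(i)‖² ≤ ‖w_0^(i)‖² + 2 (f(W_0, g_0) − f*) / L̃_{w^(i)}. -/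
open MeasureTheory RealInnerProductSpace
open scoped BigOperators

noncomputable section

/-- The joint space of weights and parameters, with the `ℓ²` (Euclidean) structure. -/
abbrev Dom (m : ℕ) (d : Fin m → ℕ) (p : ℕ) : Type := WithLp 2 (Wsp m d × Gsp p)

/-- The full (Fréchet) gradient of `f` at `(W, g)`. -/
def fullGrad {m p : ℕ} {d : Fin m → ℕ} (f : Wsp m d → Gsp p → ℝ)
    (W : Wsp m d) (g : Gsp p) : Dom m d p :=
  gradient
    (fun q : Dom m d p =>
      f (WithLp.equiv 2 (Wsp m d × Gsp p) q).1 (WithLp.equiv 2 (Wsp m d × Gsp p) q).2)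
    ((WithLp.equiv 2 (Wsp m d × Gsp p)).symm (W, g))

/-- Blockwise normalization `V = (w⁽¹⁾/‖w⁽¹⁾‖, …, w⁽ᵐ⁾/‖w⁽ᵐ⁾‖)`. -/
def normalizeW {m : ℕ} {d : Fin m → ℕ} (W : Wsp m d) : Wsp m d :=
  WithLp.toLp 2 fun i => ‖W i‖⁻¹ • W i

/-- The second-derivative block `∇²_{w⁽ⁱ⁾ w⁽ʲ⁾} f (W, g)`, as a continuous linear map. -/
def hessWW {m p : ℕ} {d : Fin m → ℕ} (f : Wsp m d → Gsp p → ℝ)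
    (W : Wsp m d) (g : Gsp p) (i j : Fin m) :
    EuclideanSpace ℝ (Fin (d j)) →L[ℝ] EuclideanSpace ℝ (Fin (d i)) :=
  fderiv ℝ (fun v => gradW f (WithLp.toLp 2 (Function.update W j v)) g i) (W j)

/-- The second-derivative block `∇²_{w⁽ⁱ⁾ g} f (W, g)`, as a continuous linear map. -/
def hessWG {m p : ℕ} {d : Fin m → ℕ} (f : Wsp m d → Gsp p → ℝ)
    (W : Wsp m d) (g : Gsp p) (i : Fin m) :
    Gsp p →L[ℝ] EuclideanSpace ℝ (Fin (d i)) :=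
  fderiv ℝ (fun u => gradW f W u i) g

/-- The second-derivative block `∇²_{gg} f (W, g)`, as a continuous linear map. -/
def hessGG {m p : ℕ} {d : Fin m → ℕ} (f : Wsp m d → Gsp p → ℝ)
    (W : Wsp m d) (g : Gsp p) : Gsp p →L[ℝ] Gsp p :=
  fderiv ℝ (fun u => gradG f W u) g


/-!
Positive scale invariance makes `f` constant along `s ↦ (1 + s) w⁽ⁱ⁾`, so the block gradient
`∇_{w⁽ⁱ⁾} f` is orthogonal to `w⁽ⁱ⁾` (Euler's identity) and each step of gradient descent
increases `‖w⁽ⁱ⁾‖²` by exactly `‖∇_{w⁽ⁱ⁾} f‖² / L̃_{w⁽ⁱ⁾}²`. The Hessian block bounds give,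
by AM–GM on the off-diagonal blocks, `D²f(Δ, Δ) ≤ Σᵢ L̃_{w⁽ⁱ⁾} ‖Δᵢ‖² + L̃_g ‖Δ_g‖²`, so by
Taylor's formula each step decreases `f` by at least `‖∇_{w⁽ⁱ⁾} f‖² / (2 L̃_{w⁽ⁱ⁾})`.
Hence `‖w⁽ⁱ⁾‖² + (2 / L̃_{w⁽ⁱ⁾}) f` does not increase along the iteration, and `f ≥ f*`.
-/

open Function

section PartialGradient

variable {E X Y : Type*} [NormedAddCommGroup E] [NormedSpace ℝ E]
  [NormedAddCommGroup X] [InnerProductSpace ℝ X] [CompleteSpace X]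
  [NormedAddCommGroup Y] [NormedSpace ℝ Y]

def partialGrad (F : E → ℝ) (B : X →L[ℝ] E) (y : E) : X :=
  (InnerProductSpace.toDual ℝ X).symm ((fderiv ℝ F y).comp B)

theorem inner_partialGrad (F : E → ℝ) (B : X →L[ℝ] E) (y : E) (v : X) :
    ⟪partialGrad F B y, v⟫ = fderiv ℝ F y (B v) :=
  InnerProductSpace.toDual_symm_apply

theorem hasFDerivAt_add_apply_sub (y : E) (A : Y →L[ℝ] E) (v₀ : Y) :
    HasFDerivAt (fun v => y + A (v - v₀)) A v₀ := by
  simpa using ((A.hasFDerivAt.comp v₀ ((hasFDerivAt_id v₀).sub_const v₀)).const_add y)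

theorem gradient_comp_add_apply_sub {F : E → ℝ} {y : E} (hF : DifferentiableAt ℝ F y)
    (B : X →L[ℝ] E) (x₀ : X) :
    gradient (fun x => F (y + B (x - x₀))) x₀ = partialGrad F B y := by
  have hF' : HasFDerivAt F (fderiv ℝ F y) (y + B (x₀ - x₀)) := by
    simpa using hF.hasFDerivAt
  have hcomp : HasFDerivAt (fun x => F (y + B (x - x₀))) ((fderiv ℝ F y).comp B) x₀ :=
    hF'.comp x₀ (hasFDerivAt_add_apply_sub y B x₀)
  rw [gradient, hcomp.fderiv, partialGrad]

theorem inner_fderiv_partialGrad_comp_add_apply_sub {F : E → ℝ} (hF : ContDiff ℝ 2 F)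
    (B : X →L[ℝ] E) (A : Y →L[ℝ] E) (y : E) (v₀ u : Y) (w : X) :
    ⟪fderiv ℝ (fun v => partialGrad F B (y + A (v - v₀))) v₀ u, w⟫ =
      fderiv ℝ (fderiv ℝ F) y (A u) (B w) := by
  have hF2 : HasFDerivAt (fderiv ℝ F) (fderiv ℝ (fderiv ℝ F) y) (y + A (v₀ - v₀)) := by
    simpa using ((hF.fderiv_right (m := 1) le_rfl).differentiable one_ne_zero y).hasFDerivAt
  let dualPrecomp : (E →L[ℝ] ℝ) →L[ℝ] X :=
    (InnerProductSpace.toDual ℝ X).symm.toLinearIsometry.toContinuousLinearMap ∘L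
      (ContinuousLinearMap.compL ℝ X E ℝ).flip B
  have hderiv := dualPrecomp.hasFDerivAt.comp v₀ (hF2.comp v₀ (hasFDerivAt_add_apply_sub y A v₀))
  rw [show (fun v => partialGrad F B (y + A (v - v₀))) = dualPrecomp ∘ fderiv ℝ F ∘
    (fun v => y + A (v - v₀)) from rfl, hderiv.fderiv]
  simp [dualPrecomp, InnerProductSpace.toDual_symm_apply]

end PartialGradient

theorem le_add_deriv_add_half_of_deriv2_le {φ φ' φ'' : ℝ → ℝ} {M : ℝ}
    (hφ : ∀ s, HasDerivAt φ (φ' s) s) (hφ' : ∀ s, HasDerivAt φ' (φ'' s) s)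
    (hM : ∀ s ∈ Set.Icc (0 : ℝ) 1, φ'' s ≤ M) :
    φ 1 ≤ φ 0 + φ' 0 + M / 2 := by
  have hψ : ∀ s, HasDerivAt (fun s => φ' s - φ' 0 - M * s) (φ'' s - M) s := fun s =>
    (((hφ' s).sub_const (φ' 0)).sub ((hasDerivAt_id' s).const_mul M)).congr_deriv (by ring)
  have hχ : ∀ s, HasDerivAt (fun s => φ s - φ' 0 * s - M / 2 * s ^ 2)
      (φ' s - φ' 0 - M * s) s := fun s =>
    (((hφ s).sub ((hasDerivAt_id' s).const_mul (φ' 0))).sub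
      ((hasDerivAt_pow 2 s).const_mul (M / 2))).congr_deriv (by push_cast; ring)
  have hψ_anti : AntitoneOn (fun s => φ' s - φ' 0 - M * s) (Set.Icc 0 1) :=
    antitoneOn_of_hasDerivWithinAt_nonpos (convex_Icc 0 1)
      (fun s _ => (hψ s).continuousAt.continuousWithinAt)
      (fun s _ => (hψ s).hasDerivWithinAt)
      (fun s hs => sub_nonpos.2 (hM s (interior_subset hs)))
  have hχ_anti : AntitoneOn (fun s => φ s - φ' 0 * s - M / 2 * s ^ 2) (Set.Icc 0 1) :=
    antitoneOn_of_hasDerivWithinAt_nonpos (convex_Icc 0 1)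
      (fun s _ => (hχ s).continuousAt.continuousWithinAt)
      (fun s _ => (hχ s).hasDerivWithinAt)
      (fun s hs => by
        have := hψ_anti (Set.left_mem_Icc.2 zero_le_one) (interior_subset hs)
          (interior_subset hs).1
        simpa using this)
  have := hχ_anti (Set.left_mem_Icc.2 zero_le_one) (Set.right_mem_Icc.2 zero_le_one) zero_le_one
  norm_num at this
  linarith

section SecondOrder

variable {E : Type*} [NormedAddCommGroup E] [NormedSpace ℝ E]

theorem le_add_fderiv_add_half_of_fderiv_fderiv_le {F : E → ℝ} (hF : ContDiff ℝ 2 F)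
    (y Δ : E) {M : ℝ} (hM : ∀ s ∈ Set.Icc (0 : ℝ) 1, fderiv ℝ (fderiv ℝ F) (y + s • Δ) Δ Δ ≤ M) :
    F (y + Δ) ≤ F y + fderiv ℝ F y Δ + M / 2 := by
  have hline : ∀ s : ℝ, HasDerivAt (fun s : ℝ => y + s • Δ) Δ s := fun s => by
    simpa using ((hasDerivAt_id s).smul_const Δ).const_add y
  have hF1 : ∀ q, HasFDerivAt F (fderiv ℝ F q) q := fun q =>
    (hF.differentiable two_ne_zero q).hasFDerivAt
  have hF2 : ∀ q, HasFDerivAt (fderiv ℝ F) (fderiv ℝ (fderiv ℝ F) q) q := fun q =>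
    ((hF.fderiv_right (m := 1) le_rfl).differentiable one_ne_zero q).hasFDerivAt
  have := le_add_deriv_add_half_of_deriv2_le (φ := fun s => F (y + s • Δ))
    (fun s => (hF1 _).comp_hasDerivAt s (hline s))
    (fun s => ((ContinuousLinearMap.apply ℝ ℝ Δ).hasFDerivAt.comp_hasDerivAt s
      ((hF2 _).comp_hasDerivAt s (hline s))))
    hM
  simpa using this

theorem apply_sum_sum_le_of_symm {ι : Type*} [Fintype ι] (B : E →L[ℝ] E →L[ℝ] ℝ)
    (hB : ∀ u v, B u v = B v u) (v : ι → E) (x : ι → ℝ) (C : ι → ι → ℝ)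
    (hC : ∀ k l, 0 ≤ C k l) (hBC : ∀ k l, B (v k) (v l) ≤ C k l * (x k * x l)) :
    B (∑ k, v k) (∑ k, v k) ≤ ∑ k, (∑ l, C k l) * x k ^ 2 := by
  -- AM-GM on each term, using whichever of `C k l`, `C l k` is smaller
  have hterm : ∀ k l, B (v k) (v l) ≤ (C k l * x k ^ 2 + C l k * x l ^ 2) / 2 := by
    intro k l
    have h₁ := hBC k l
    have h₂ : B (v k) (v l) ≤ C l k * (x k * x l) := by
      rw [hB, mul_comm (x k)]; exact hBC l k
    rcases le_total (C k l) (C l k) with h | h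
    · nlinarith [sq_nonneg (x k - x l), hC k l]
    · nlinarith [sq_nonneg (x k - x l), hC l k]
  calc B (∑ k, v k) (∑ k, v k) = ∑ k, ∑ l, B (v k) (v l) := by
        simp only [map_sum, sum_apply]
        exact Finset.sum_comm
    _ ≤ ∑ k, ∑ l, (C k l * x k ^ 2 + C l k * x l ^ 2) / 2 :=
        Finset.sum_le_sum fun k _ => Finset.sum_le_sum fun l _ => hterm k l
    _ = ∑ k, (∑ l, C k l) * x k ^ 2 := by
        simp only [← Finset.sum_div, Finset.sum_add_distrib, Finset.sum_mul]
        rw [Finset.sum_comm (f := fun k l => C l k * x l ^ 2)]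
        ring

end SecondOrder

theorem inner_apply_le_of_opNorm_le {X Y : Type*} [NormedAddCommGroup X] [NormedSpace ℝ X]
    [NormedAddCommGroup Y] [InnerProductSpace ℝ Y] {T : X →L[ℝ] Y} {L : ℝ} (hT : ‖T‖ ≤ L)
    (u : X) (w : Y) : ⟪T u, w⟫ ≤ L * (‖u‖ * ‖w‖) :=
  calc ⟪T u, w⟫ ≤ ‖T u‖ * ‖w‖ := real_inner_le_norm _ _
    _ ≤ L * ‖u‖ * ‖w‖ := by gcongr; exact T.le_of_opNorm_le hT u
    _ = L * (‖u‖ * ‖w‖) := mul_assoc _ _ _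

theorem mul_one_div_sq (L : ℝ) : L * (1 / L) ^ 2 = 1 / L := by
  rcases eq_or_ne L 0 with rfl | hL
  · simp
  · field_simp

theorem le_add_two_mul_sub_div_of_descent {a φ b : ℕ → ℝ} {L φstar : ℝ} (hL : 0 ≤ L)
    (ha : ∀ t, a (t + 1) = a t + (1 / L) ^ 2 * b t) (hφ : ∀ t, φ (t + 1) + 1 / L * b t / 2 ≤ φ t)
    (hlow : ∀ t, φstar ≤ φ t) (t : ℕ) :
    a t ≤ a 0 + 2 * (φ 0 - φstar) / L := by
  have h2L : 0 ≤ 2 / L := by positivity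
  have hanti : Antitone fun t => a t + 2 / L * φ t := antitone_nat_of_succ_le fun t =>
    calc a (t + 1) + 2 / L * φ (t + 1) = a t + 2 / L * (φ (t + 1) + 1 / L * b t / 2) := by
          rw [ha]; ring
      _ ≤ a t + 2 / L * φ t := by gcongr; exact hφ t
  have h0 : a t + 2 / L * φ t ≤ a 0 + 2 / L * φ 0 := hanti (Nat.zero_le t)
  calc a t ≤ a 0 + 2 / L * (φ 0 - φ t) := by linarith
    _ ≤ a 0 + 2 / L * (φ 0 - φstar) := by gcongr; exact hlow t
    _ = a 0 + 2 * (φ 0 - φstar) / L := by ring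

section Blocks

variable {m p : ℕ} {d : Fin m → ℕ}

def embedW (i : Fin m) : EuclideanSpace ℝ (Fin (d i)) →L[ℝ] Wsp m d × Gsp p :=
  ContinuousLinearMap.inl ℝ _ _ ∘L (PiLp.continuousLinearEquiv 2 ℝ _).symm.toContinuousLinearMap ∘L
    ContinuousLinearMap.single ℝ (fun j => EuclideanSpace ℝ (Fin (d j))) i

@[simp]
theorem embedW_apply (i : Fin m) (v : EuclideanSpace ℝ (Fin (d i))) :
    (embedW i v : Wsp m d × Gsp p) = (PiLp.single 2 i v, 0) := rfl

theorem sum_embedW_add_inr (Δ : Wsp m d × Gsp p) :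
    ∑ i, embedW i (Δ.1 i) + ContinuousLinearMap.inr ℝ _ _ Δ.2 = Δ := by
  refine Prod.ext ?_ (by simp [Prod.snd_sum])
  simp only [Prod.fst_add, Prod.fst_sum, embedW_apply, ContinuousLinearMap.inr_apply, add_zero]
  ext j
  simp [← PiLp.toLp_single]

theorem toLp_update_eq_add_embedW (W : Wsp m d) (g : Gsp p) (i : Fin m)
    (v : EuclideanSpace ℝ (Fin (d i))) :
    (WithLp.toLp 2 (update W i v), g) = (W, g) + embedW i (v - W i) := by
  refine Prod.ext ?_ (by simp)
  ext j
  rcases eq_or_ne j i with rfl | hj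
  · simp
  · simp [hj]

variable (f : Wsp m d → Gsp p → ℝ)

theorem gradW_eq_partialGrad (hf : Differentiable ℝ (uncurry f)) (W : Wsp m d) (g : Gsp p)
    (i : Fin m) : gradW f W g i = partialGrad (uncurry f) (embedW i) (W, g) := by
  show gradient (fun v => uncurry f (WithLp.toLp 2 (update W i v), g)) (W i) = _
  simp only [toLp_update_eq_add_embedW]
  exact gradient_comp_add_apply_sub (hf _) _ _

theorem gradG_eq_partialGrad (hf : Differentiable ℝ (uncurry f)) (W : Wsp m d) (g : Gsp p) :
    gradG f W g = partialGrad (uncurry f) (ContinuousLinearMap.inr ℝ _ _) (W, g) := by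
  have hpath : (fun u => f W u) =
      fun u => uncurry f ((W, g) + ContinuousLinearMap.inr ℝ _ _ (u - g)) := by
    simp
  rw [gradG, hpath]
  exact gradient_comp_add_apply_sub (hf _) _ _

theorem fderiv_uncurry_apply (hf : Differentiable ℝ (uncurry f)) (W : Wsp m d) (g : Gsp p)
    (Δ : Wsp m d × Gsp p) :
    fderiv ℝ (uncurry f) (W, g) Δ = ∑ i, ⟪gradW f W g i, Δ.1 i⟫ + ⟪gradG f W g, Δ.2⟫ := by
  conv_lhs => rw [← sum_embedW_add_inr Δ]
  simp only [map_add, map_sum, gradW_eq_partialGrad f hf, gradG_eq_partialGrad f hf,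
    inner_partialGrad]

theorem inner_hessWW_apply (hf : ContDiff ℝ 2 (uncurry f)) (W : Wsp m d) (g : Gsp p)
    (i j : Fin m) (u : EuclideanSpace ℝ (Fin (d j))) (w : EuclideanSpace ℝ (Fin (d i))) :
    ⟪hessWW f W g i j u, w⟫ = fderiv ℝ (fderiv ℝ (uncurry f)) (W, g) (embedW j u) (embedW i w) := by
  simp only [hessWW, gradW_eq_partialGrad f (hf.differentiable two_ne_zero),
    toLp_update_eq_add_embedW]
  exact inner_fderiv_partialGrad_comp_add_apply_sub hf _ _ _ _ _ _

theorem inner_hessWG_apply (hf : ContDiff ℝ 2 (uncurry f)) (W : Wsp m d) (g : Gsp p)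
    (i : Fin m) (u : Gsp p) (w : EuclideanSpace ℝ (Fin (d i))) :
    ⟪hessWG f W g i u, w⟫ =
      fderiv ℝ (fderiv ℝ (uncurry f)) (W, g) (ContinuousLinearMap.inr ℝ _ _ u) (embedW i w) := by
  have hpath : (fun u' => gradW f W u' i) = fun u' => partialGrad (uncurry f) (embedW i)
      ((W, g) + ContinuousLinearMap.inr ℝ _ _ (u' - g)) := by
    simp [gradW_eq_partialGrad f (hf.differentiable two_ne_zero)]
  rw [hessWG, hpath]
  exact inner_fderiv_partialGrad_comp_add_apply_sub hf _ _ _ _ _ _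

theorem inner_hessGG_apply (hf : ContDiff ℝ 2 (uncurry f)) (W : Wsp m d) (g : Gsp p)
    (u w : Gsp p) :
    ⟪hessGG f W g u, w⟫ = fderiv ℝ (fderiv ℝ (uncurry f)) (W, g)
      (ContinuousLinearMap.inr ℝ _ _ u) (ContinuousLinearMap.inr ℝ _ _ w) := by
  have hpath : (fun u' => gradG f W u') = fun u' => partialGrad (uncurry f)
      (ContinuousLinearMap.inr ℝ _ _) ((W, g) + ContinuousLinearMap.inr ℝ _ _ (u' - g)) := by
    simp [gradG_eq_partialGrad f (hf.differentiable two_ne_zero)]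
  rw [hessGG, hpath]
  exact inner_fderiv_partialGrad_comp_add_apply_sub hf _ _ _ _ _ _

theorem inner_gradW_self_eq_zero (hf : Differentiable ℝ (uncurry f)) (hPSI : PSI f) (W : Wsp m d)
    (g : Gsp p) (i : Fin m) : ⟪gradW f W g i, W i⟫ = 0 := by
  set v := embedW (p := p) i (W i)
  -- rescaling the `i`-th block by `1 + s > 0` is the move `(W, g) ↦ (W, g) + s • v`
  have hconst : (fun s : ℝ => uncurry f ((W, g) + s • v)) =ᶠ[nhds 0] fun _ => f W g := by
    filter_upwards [Ioi_mem_nhds (show (-1 : ℝ) < 0 by norm_num)] with s hs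
    have ha : ∀ j, 0 < update (fun _ => (1 : ℝ)) i (1 + s) j := fun j => by
      rcases eq_or_ne j i with rfl | hj
      · rw [update_self]; linarith [hs.out]
      · simp [hj]
    rw [← hPSI _ ha W g]
    show uncurry f _ = uncurry f (rescale _ W, g)
    congr 1
    refine Prod.ext ?_ (by simp [v])
    ext j
    rcases eq_or_ne j i with rfl | hj
    · simp [v, rescale, add_smul, add_comm]
    · simp [v, rescale, hj]
  have hline : HasDerivAt (fun s : ℝ => uncurry f ((W, g) + s • v))
      (fderiv ℝ (uncurry f) (W, g) v) 0 := by
    have hmove := ((hasDerivAt_id' (0 : ℝ)).smul_const v).const_add (W, g)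
    rw [one_smul] at hmove
    have h := (hf ((W, g) + (0 : ℝ) • v)).hasFDerivAt.comp_hasDerivAt 0 hmove
    rwa [zero_smul, add_zero] at h
  rw [gradW_eq_partialGrad f hf, inner_partialGrad]
  exact hline.unique ((hasDerivAt_const _ _).congr_of_eventuallyEq hconst)

-- `none` indexes the parameter block `g`, `some i` the weight block `w⁽ⁱ⁾`.
def blockBound (Lww : Fin m → Fin m → ℝ) (Lwg : Fin m → ℝ) (Lgg : ℝ) :
    Option (Fin m) → Option (Fin m) → ℝ
  | some i, some j => Lww i j
  | some i, none => Lwg i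
  | none, some j => Lwg j
  | none, none => Lgg

theorem fderiv_fderiv_apply_le_blockwise (hf : ContDiff ℝ 2 (uncurry f)) (hm : 0 < m)
    (Lww : Fin m → Fin m → ℝ) (Lwg : Fin m → ℝ) (Lgg : ℝ)
    (hww : ∀ W g i j, ‖hessWW f W g i j‖ ≤ Lww i j) (hwg : ∀ W g i, ‖hessWG f W g i‖ ≤ Lwg i)
    (hgg : ∀ W g, ‖hessGG f W g‖ ≤ Lgg) (q Δ : Wsp m d × Gsp p) :
    fderiv ℝ (fderiv ℝ (uncurry f)) q Δ Δ ≤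
      ∑ i, (Lwg i + ∑ j, Lww i j) * ‖Δ.1 i‖ ^ 2 + (m * Lgg + ∑ i, Lwg i) * ‖Δ.2‖ ^ 2 := by
  obtain ⟨W, g⟩ := q
  set D := fderiv ℝ (fderiv ℝ (uncurry f)) (W, g)
  have hsym : ∀ u v, D u v = D v u := fun u v =>
    (hf.contDiffAt.isSymmSndFDerivAt (by simp)).eq u v
  have hC : ∀ k l, 0 ≤ blockBound Lww Lwg Lgg k l := by
    rintro (_ | i) (_ | j)
    exacts [(norm_nonneg _).trans (hgg W g), (norm_nonneg _).trans (hwg W g j),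
      (norm_nonneg _).trans (hwg W g i), (norm_nonneg _).trans (hww W g i j)]
  let v : Option (Fin m) → Wsp m d × Gsp p := fun k =>
    k.elim (ContinuousLinearMap.inr ℝ _ _ Δ.2) fun i => embedW i (Δ.1 i)
  let x : Option (Fin m) → ℝ := fun k => k.elim ‖Δ.2‖ fun i => ‖Δ.1 i‖
  have hsum : ∑ k, v k = Δ := by
    rw [Fintype.sum_option, add_comm]
    exact sum_embedW_add_inr Δ
  have hbound : ∀ k l, D (v k) (v l) ≤ blockBound Lww Lwg Lgg k l * (x k * x l) := by
    rintro (_ | i) (_ | j)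
    · have h := inner_apply_le_of_opNorm_le (hgg W g) Δ.2 Δ.2
      rwa [inner_hessGG_apply f hf] at h
    · have h := inner_apply_le_of_opNorm_le (hwg W g j) Δ.2 (Δ.1 j)
      rwa [inner_hessWG_apply f hf] at h
    · have h := inner_apply_le_of_opNorm_le (hwg W g i) Δ.2 (Δ.1 i)
      rw [inner_hessWG_apply f hf] at h
      exact (hsym _ _).trans_le (h.trans_eq (congrArg _ (mul_comm _ _)))
    · have h := inner_apply_le_of_opNorm_le (hww W g i j) (Δ.1 j) (Δ.1 i)
      rw [inner_hessWW_apply f hf] at h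
      exact (hsym _ _).trans_le (h.trans_eq (congrArg _ (mul_comm _ _)))
  have hLgg : Lgg ≤ m * Lgg := le_mul_of_one_le_left (hC none none) (by exact_mod_cast hm)
  calc D Δ Δ = D (∑ k, v k) (∑ k, v k) := by rw [hsum]
    _ ≤ ∑ k, (∑ l, blockBound Lww Lwg Lgg k l) * x k ^ 2 :=
        apply_sum_sum_le_of_symm D hsym v x _ hC hbound
    _ ≤ _ := by
        simp only [Fintype.sum_option, blockBound, x, Option.elim]
        rw [add_comm]
        gcongr

theorem gd_step_descent (hf : ContDiff ℝ 2 (uncurry f))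
    (Ltw : Fin m → ℝ) (Ltg : ℝ)
    (hQ : ∀ q Δ, fderiv ℝ (fderiv ℝ (uncurry f)) q Δ Δ ≤
      ∑ i, Ltw i * ‖Δ.1 i‖ ^ 2 + Ltg * ‖Δ.2‖ ^ 2)
    (W W' : Wsp m d) (g g' : Gsp p)
    (hW' : ∀ i, W' i = W i - (1 / Ltw i) • gradW f W g i)
    (hg' : g' = g - (1 / Ltg) • gradG f W g) :
    f W' g' + (∑ i, 1 / Ltw i * ‖gradW f W g i‖ ^ 2 + 1 / Ltg * ‖gradG f W g‖ ^ 2) / 2 ≤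
      f W g := by
  set M := ∑ i, 1 / Ltw i * ‖gradW f W g i‖ ^ 2 + 1 / Ltg * ‖gradG f W g‖ ^ 2
  set Δ : Wsp m d × Gsp p := (W', g') - (W, g)
  have hΔ1 : ∀ i, Δ.1 i = -((1 / Ltw i) • gradW f W g i) := fun i => by simp [Δ, hW']
  have hΔ2 : Δ.2 = -((1 / Ltg) • gradG f W g) := by simp [Δ, hg']
  have hQΔ : ∑ i, Ltw i * ‖Δ.1 i‖ ^ 2 + Ltg * ‖Δ.2‖ ^ 2 = M := by
    simp only [hΔ1, hΔ2, norm_neg, norm_smul, mul_pow, Real.norm_eq_abs, sq_abs, ← mul_assoc,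
      mul_one_div_sq, M]
  have hDΔ : fderiv ℝ (uncurry f) (W, g) Δ = -M := by
    rw [fderiv_uncurry_apply f (hf.differentiable two_ne_zero)]
    simp only [hΔ1, hΔ2, inner_neg_right, real_inner_smul_right, real_inner_self_eq_norm_sq,
      Finset.sum_neg_distrib, M]
    ring
  have h := le_add_fderiv_add_half_of_fderiv_fderiv_le hf (W, g) Δ
    (fun s _ => (hQ _ Δ).trans_eq hQΔ)
  rw [add_sub_cancel, hDΔ, uncurry_apply_pair, uncurry_apply_pair] at h
  linarith

theorem norm_sq_gd_step (hf : Differentiable ℝ (uncurry f)) (hPSI : PSI f) (W W' : Wsp m d)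
    (g : Gsp p) (i : Fin m) (c : ℝ) (hW' : W' i = W i - c • gradW f W g i) :
    ‖W' i‖ ^ 2 = ‖W i‖ ^ 2 + c ^ 2 * ‖gradW f W g i‖ ^ 2 := by
  rw [hW', norm_sub_sq_real, real_inner_smul_right, real_inner_comm,
    inner_gradW_self_eq_zero f hf hPSI, norm_smul, mul_pow, Real.norm_eq_abs, sq_abs]
  ring

end Blocks

theorem stmt17_general {m p : ℕ} {d : Fin m → ℕ} (f : Wsp m d → Gsp p → ℝ)
    (hf : ContDiff ℝ 2 fun q : Wsp m d × Gsp p => f q.1 q.2)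
    (hPSI : PSI f)
    (fstar : ℝ)
    (hbdd : BddBelow (Set.range fun q : Wsp m d × Gsp p => f q.1 q.2))
    (hfstar : fstar = ⨅ q : Wsp m d × Gsp p, f q.1 q.2)
    (Lww : Fin m → Fin m → ℝ) (Lwg : Fin m → ℝ) (Lgg : ℝ)
    (hww : ∀ W g i j, ‖hessWW f W g i j‖ ≤ Lww i j)
    (hwg : ∀ W g i, ‖hessWG f W g i‖ ≤ Lwg i)
    (hgg : ∀ W g, ‖hessGG f W g‖ ≤ Lgg)
    (Ltw : Fin m → ℝ) (Ltg : ℝ)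
    (hLtw : ∀ i, Ltw i = Lwg i + ∑ j, Lww i j)
    (hLtg : Ltg = m * Lgg + ∑ i, Lwg i)
    (W : ℕ → Wsp m d) (g : ℕ → Gsp p)
    (hWupd : ∀ t i, W (t + 1) i = W t i - (1 / Ltw i) • gradW f (W t) (g t) i)
    (hgupd : ∀ t, g (t + 1) = g t - (1 / Ltg) • gradG f (W t) (g t)) :
    ∀ (t : ℕ) (i : Fin m),
      ‖W t i‖ ^ 2 ≤ ‖W 0 i‖ ^ 2 + 2 * (f (W 0) (g 0) - fstar) / Ltw i := by
  intro t i
  have hQ := fderiv_fderiv_apply_le_blockwise f hf i.pos Lww Lwg Lgg hww hwg hgg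
  simp only [← hLtw, ← hLtg] at hQ
  have hLtw_nonneg : ∀ j, 0 ≤ Ltw j := fun j => hLtw j ▸ add_nonneg
    ((norm_nonneg _).trans (hwg 0 0 j))
    (Finset.sum_nonneg fun k _ => (norm_nonneg _).trans (hww 0 0 j k))
  have hLtg_nonneg : 0 ≤ Ltg := hLtg ▸ add_nonneg
    (mul_nonneg m.cast_nonneg ((norm_nonneg _).trans (hgg 0 0)))
    (Finset.sum_nonneg fun k _ => (norm_nonneg _).trans (hwg 0 0 k))
  refine le_add_two_mul_sub_div_of_descent (a := fun t => ‖W t i‖ ^ 2)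
    (φ := fun t => f (W t) (g t)) (b := fun t => ‖gradW f (W t) (g t) i‖ ^ 2) (hLtw_nonneg i)
    (fun s => ?_) (fun s => ?_) (fun s => hfstar ▸ ciInf_le hbdd (W s, g s)) t
  · exact norm_sq_gd_step f (hf.differentiable two_ne_zero) hPSI _ _ _ i _ (hWupd s i)
  · have hdesc := gd_step_descent f hf Ltw Ltg hQ _ _ _ _ (hWupd s) (hgupd s)
    have hterm := Finset.single_le_sum (fun j _ => mul_nonneg (one_div_nonneg.2 (hLtw_nonneg j))
      (sq_nonneg ‖gradW f (W s) (g s) j‖)) (Finset.mem_univ i)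
    have hG := mul_nonneg (one_div_nonneg.2 hLtg_nonneg) (sq_nonneg ‖gradG f (W s) (g s)‖)
    linarith

/-- Weight-norm bound for GD: per-block,
`‖w_t⁽ⁱ⁾‖² ≤ ‖w₀⁽ⁱ⁾‖² + 2 (f(W₀,g₀) − f*) / L̃_{w⁽ⁱ⁾}` for all `t`. -/
theorem stmt17 {m p : ℕ} {d : Fin m → ℕ} (f : Wsp m d → Gsp p → ℝ)
    (hf : ContDiff ℝ 2 fun q : Wsp m d × Gsp p => f q.1 q.2)
    (hPSI : PSI f)
    (fstar : ℝ)
    (hbdd : BddBelow (Set.range fun q : Wsp m d × Gsp p => f q.1 q.2))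
    (hfstar : fstar = ⨅ q : Wsp m d × Gsp p, f q.1 q.2)
    (Lww : Fin m → Fin m → ℝ) (Lwg : Fin m → ℝ) (Lgg : ℝ)
    (hLwwpos : ∀ i j, 0 < Lww i j) (hLwgpos : ∀ i, 0 < Lwg i) (hLggpos : 0 < Lgg)
    (hww : ∀ W g i j, ‖hessWW f W g i j‖ ≤ Lww i j)
    (hwg : ∀ W g i, ‖hessWG f W g i‖ ≤ Lwg i)
    (hgg : ∀ W g, ‖hessGG f W g‖ ≤ Lgg)
    (Ltw : Fin m → ℝ) (Ltg : ℝ)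
    (hLtw : ∀ i, Ltw i = Lwg i + ∑ j, Lww i j)
    (hLtg : Ltg = m * Lgg + ∑ i, Lwg i)
    (W : ℕ → Wsp m d) (g : ℕ → Gsp p)
    (hW0nz : ∀ i, W 0 i ≠ 0)
    (hWupd : ∀ t i, W (t + 1) i = W t i - (1 / Ltw i) • gradW f (W t) (g t) i)
    (hgupd : ∀ t, g (t + 1) = g t - (1 / Ltg) • gradG f (W t) (g t)) :
    ∀ (t : ℕ) (i : Fin m),
      ‖W t i‖ ^ 2 ≤ ‖W 0 i‖ ^ 2 + 2 * (f (W 0) (g 0) - fstar) / Ltw i :=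
  stmt17_general f hf hPSI fstar hbdd hfstar Lww Lwg Lgg hww hwg hgg Ltw Ltg hLtw hLtg W g hWupd
    hgupd
end
end
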